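/- Let (G,·,▷,Φ) be a twisted post group with sub-adjacent operation ∘, and for a,b∈G let e_a, e_b be as usual. Then the map π_{a,b}: G_a → G_b given by π_{a,b}(t) = t∘e_b is a group isomorphism, where G_x = {c∘e_x | c∈G} carries the group structure from ∘. -/

import Mathlib

/-- A (left) twisted post group: a group `G` with a binary operation `tri` (written `▷`)
and a cocycle `phi` such that each left multiplication `tri a` is a group automorphism,
`(a ∘ b) ▷ c = a ▷ (b ▷ c)` and `Φ(a ∘ b) = a ∘ Φ(b)`, where `a ∘ b = Φ(a)·(a ▷ b)`. -/
structure TPG (G : Type*) [Group G] where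
  tri : G → G → G
  phi : G → G
  tri_mul : ∀ a b c : G, tri a (b * c) = tri a b * tri a c
  tri_bij : ∀ a : G, Function.Bijective (tri a)
  tri_assoc : ∀ a b c : G, tri (phi a * tri a b) c = tri a (tri b c)
  phi_comp : ∀ a b : G, phi (phi a * tri a b) = phi a * tri a (phi b)

namespace TPG

variable {G : Type*} [Group G] (T : TPG G)

/-- The sub-adjacent operation `a ∘ b = Φ(a)·(a ▷ b)`. -/
def circ (a b : G) : G := T.phi a * T.tri a b

/-- `e_a = (L_a^▷)⁻¹(Φ(a)⁻¹·a)`. -/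
noncomputable def e (a : G) : G := Function.invFun (T.tri a) ((T.phi a)⁻¹ * a)

/-- `a† = (L_a^▷)⁻¹(Φ(a)⁻¹·e_a)`. -/
noncomputable def dag (a : G) : G := Function.invFun (T.tri a) ((T.phi a)⁻¹ * T.e a)

end TPG

/-!
`∘` is associative and every `e_a` is a left identity for `∘`: from `a ∘ e_a = a`, the axiom
`(a ∘ e_a) ▷ c = a ▷ (e_a ▷ c)` and injectivity of `a ▷ ·` give `e_a ▷ c = c`, and
`Φ(a ∘ e_a) = a ∘ Φ(e_a)` gives `Φ(e_a) = 1`. Hence `(x ∘ e_a) ∘ e_b = x ∘ (e_a ∘ e_b) = x ∘ e_b`,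
so `t ↦ t ∘ e_a` inverts `π_{a,b}`, and `(s ∘ t) ∘ e_b = s ∘ (e_b ∘ (t ∘ e_b))` is the homomorphism
property.
-/

namespace TPG

variable {G : Type*} [Group G] (T : TPG G)

lemma tri_one (a : G) : T.tri a 1 = 1 :=
  (MonoidHom.mk' (T.tri a) (T.tri_mul a)).map_one

lemma tri_e (a : G) : T.tri a (T.e a) = (T.phi a)⁻¹ * a :=
  Function.invFun_eq ((T.tri_bij a).2 _)

lemma circ_e (a : G) : T.circ a (T.e a) = a := by
  rw [circ, tri_e, mul_inv_cancel_left]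

lemma circ_assoc (s t c : G) : T.circ (T.circ s t) c = T.circ s (T.circ t c) := by
  simp only [circ, tri_assoc, phi_comp, tri_mul, mul_assoc]

lemma e_tri (a c : G) : T.tri (T.e a) c = c := by
  have h : T.tri (T.circ a (T.e a)) c = T.tri a (T.tri (T.e a) c) := T.tri_assoc a (T.e a) c
  rw [circ_e] at h
  exact (T.tri_bij a).1 h.symm

lemma phi_e (a : G) : T.phi (T.e a) = 1 := by
  have h : T.phi (T.circ a (T.e a)) = T.phi a * T.tri a (T.phi (T.e a)) := T.phi_comp a (T.e a)
  rw [circ_e, left_eq_mul, ← T.tri_one a] at h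
  exact (T.tri_bij a).1 h

lemma e_circ (a x : G) : T.circ (T.e a) x = x := by
  rw [circ, phi_e, e_tri, one_mul]

lemma circ_e_circ_e (x a b : G) : T.circ (T.circ x (T.e a)) (T.e b) = T.circ x (T.e b) := by
  rw [circ_assoc, e_circ]

lemma circ_circ_e (s t b : G) :
    T.circ (T.circ s t) (T.e b) = T.circ (T.circ s (T.e b)) (T.circ t (T.e b)) := by
  rw [circ_assoc, circ_assoc, e_circ]

end TPG

/-- The map `t ↦ t ∘ e_b` is a group isomorphism from `(G_a, ∘)` to `(G_b, ∘)`. -/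
theorem pi_iso {G : Type*} [Group G] (T : TPG G) (a b : G) :
    (∀ t ∈ {x : G | ∃ c : G, x = T.circ c (T.e a)},
      T.circ t (T.e b) ∈ {x : G | ∃ c : G, x = T.circ c (T.e b)}) ∧
    (∀ s ∈ {x : G | ∃ c : G, x = T.circ c (T.e a)},
      ∀ t ∈ {x : G | ∃ c : G, x = T.circ c (T.e a)},
        T.circ (T.circ s t) (T.e b) = T.circ (T.circ s (T.e b)) (T.circ t (T.e b))) ∧
    (∀ s ∈ {x : G | ∃ c : G, x = T.circ c (T.e a)},
      ∀ t ∈ {x : G | ∃ c : G, x = T.circ c (T.e a)},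
        T.circ s (T.e b) = T.circ t (T.e b) → s = t) ∧
    (∀ y ∈ {x : G | ∃ c : G, x = T.circ c (T.e b)},
      ∃ t ∈ {x : G | ∃ c : G, x = T.circ c (T.e a)}, T.circ t (T.e b) = y) := by
  refine ⟨fun t _ ↦ ⟨t, rfl⟩, fun s _ t _ ↦ T.circ_circ_e s t b, ?_, ?_⟩
  · rintro _ ⟨c, rfl⟩ _ ⟨d, rfl⟩ h
    rw [T.circ_e_circ_e, T.circ_e_circ_e] at h
    rw [← T.circ_e_circ_e c b a, h, T.circ_e_circ_e]
  · rintro _ ⟨c, rfl⟩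
    exact ⟨T.circ c (T.e a), ⟨c, rfl⟩, T.circ_e_circ_e c a b⟩
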